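/- arXiv:1910.12334 — 2 statements merged into one kernel-verified Lean document; each statement's English description precedes it below -/
import Mathlib

section
/- Let 1 → Γ' → Γ → Γ'' be an exact sequence of groups (i.e., Γ' is a normal subgroup of Γ with Γ/Γ' embedding into Γ''). If Γ'' has bounded finite subgroups (there is a constant B such that every finite subgroup of Γ'' has order at most B), then Γ is Jordan if and only if Γ' is Jordan. -/
/-- A group is Jordan if there is a constant `J` such that every finite subgroup
contains a normal abelian subgroup of index at most `J`. -/
def JordanGroup (G : Type*) [Group G] : Prop :=
  ∃ J : ℕ, ∀ H : Subgroup G, Finite H →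
    ∃ A : Subgroup H, A.Normal ∧ IsMulCommutative A ∧ A.index ≤ J

/-- A group has bounded finite subgroups if the orders of its finite subgroups
are bounded by a constant. -/
def HasBoundedFiniteSubgroups (G : Type*) [Group G] : Prop :=
  ∃ B : ℕ, ∀ H : Subgroup G, Finite H → Nat.card H ≤ B

/-!
Jordan constants pass to subgroups, which gives one direction. Conversely, a finite subgroup
`H ≤ Γ` meets the image of `Γ'` in a subgroup `K` of index `|g(H)| ≤ B`, and `K` has a normal
abelian subgroup `A` of index at most `J`. Then `A` has index at most `J * B` in `H`, and its normal
core in `H` is a normal abelian subgroup of index at most `(J * B)!`.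
-/

open Nat

def HasNormalAbelianOfIndexLE (G : Type*) [Group G] (J : ℕ) : Prop :=
  ∃ A : Subgroup G, A.Normal ∧ IsMulCommutative A ∧ A.index ≤ J

def IsJordanWith (G : Type*) [Group G] (J : ℕ) : Prop :=
  ∀ H : Subgroup G, Finite H → HasNormalAbelianOfIndexLE H J

section

variable {G G' : Type*} [Group G] [Group G'] {J : ℕ}

theorem Subgroup.isMulCommutative_of_le {H K : Subgroup G} (hHK : H ≤ K) [IsMulCommutative K] :
    IsMulCommutative H :=
  .of_setLike_mul_comm fun _ ha _ hb ↦ setLike_mul_comm (hHK ha) (hHK hb)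

theorem Subgroup.index_normalCore_le_factorial (M : Subgroup G) [M.FiniteIndex] :
    M.normalCore.index ≤ M.index ! := by
  rw [normalCore_eq_ker, index_ker, index_eq_card, ← Nat.card_perm]
  exact Nat.card_le_card_of_injective _ Subtype.coe_injective

namespace HasNormalAbelianOfIndexLE

theorem mono {J' : ℕ} (h : HasNormalAbelianOfIndexLE G J) (hJ : J ≤ J') :
    HasNormalAbelianOfIndexLE G J' :=
  let ⟨A, hN, hC, hI⟩ := h
  ⟨A, hN, hC, hI.trans hJ⟩

theorem of_mulEquiv (e : G ≃* G') (h : HasNormalAbelianOfIndexLE G' J) :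
    HasNormalAbelianOfIndexLE G J :=
  let ⟨A, hN, _, hI⟩ := h
  ⟨A.comap e.toMonoidHom, hN.comap _, A.comap_injective_isMulCommutative e.injective,
    (A.index_comap_of_surjective e.surjective).trans_le hI⟩

theorem of_isMulCommutative (M : Subgroup G) [M.FiniteIndex] [IsMulCommutative M] :
    HasNormalAbelianOfIndexLE G M.index ! :=
  ⟨M.normalCore, M.normalCore_normal, Subgroup.isMulCommutative_of_le M.normalCore_le,
    M.index_normalCore_le_factorial⟩

theorem of_subgroup [Finite G] (K : Subgroup G) (h : HasNormalAbelianOfIndexLE K J) :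
    HasNormalAbelianOfIndexLE G (J * K.index)! := by
  obtain ⟨A, -, _, hI⟩ := h
  refine (of_isMulCommutative (A.map K.subtype)).mono (factorial_le ?_)
  rw [Subgroup.index_map_subtype]
  exact Nat.mul_le_mul_right _ hI

end HasNormalAbelianOfIndexLE

namespace IsJordanWith

theorem hasNormalAbelianOfIndexLE [Finite G] (h : IsJordanWith G J) :
    HasNormalAbelianOfIndexLE G J :=
  (h ⊤ inferInstance).of_mulEquiv Subgroup.topEquiv.symm

theorem of_injective (h : IsJordanWith G' J) {ψ : G →* G'} (hψ : Function.Injective ψ) :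
    IsJordanWith G J := fun H _ ↦
  let e := H.equivMapOfInjective ψ hψ
  (h _ (.of_equiv H e.toEquiv)).of_mulEquiv e

end IsJordanWith

end

/-- If `1 → Γ' → Γ → Γ''` is an exact sequence of groups and `Γ''` has bounded
finite subgroups, then `Γ` is Jordan iff `Γ'` is Jordan. -/
theorem stmt_0 {Γ' Γ Γ'' : Type*} [Group Γ'] [Group Γ] [Group Γ'']
    (f : Γ' →* Γ) (g : Γ →* Γ'')
    (hf : Function.Injective f) (hexact : g.ker = f.range)
    (hbfs : HasBoundedFiniteSubgroups Γ'') :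
    JordanGroup Γ ↔ JordanGroup Γ' := by
  constructor
  · rintro ⟨J, hJ : IsJordanWith Γ J⟩
    exact ⟨J, hJ.of_injective hf⟩
  · rintro ⟨J, hJ : IsJordanWith Γ' J⟩
    obtain ⟨B, hB⟩ := hbfs
    let e : g.ker ≃* Γ' := (MulEquiv.subgroupCongr hexact).trans (MonoidHom.ofInjective hf).symm
    have hker : IsJordanWith g.ker J := hJ.of_injective (ψ := e.toMonoidHom) e.injective
    refine ⟨(J * B)!, fun H _ ↦ ?_⟩
    let K := (g.comp H.subtype).ker
    have hK : K.index ≤ B := by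
      rw [Subgroup.index_ker]
      exact hB _ (Set.finite_range _).to_subtype
    have hK_embed :
        Function.Injective ((H.subtype.comp K.subtype).codRestrict g.ker fun k ↦ k.2) :=
      fun _ _ hk ↦ by ext; exact (congrArg Subtype.val hk :)
    exact ((hker.of_injective hK_embed).hasNormalAbelianOfIndexLE.of_subgroup K).mono
      (factorial_le (Nat.mul_le_mul_left J hK))
end

section
/- Let Γ be a group admitting a homomorphism φ: Γ → Δ to a finite group Δ whose kernel is Jordan. Then Γ is Jordan. -/
namespace Subgroup

variable {G : Type*} [Group G]

theorem isMulCommutative_of_le_s5 {H K : Subgroup G} (hKH : K ≤ H) [IsMulCommutative H] :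
    IsMulCommutative K :=
  .of_setLike_mul_comm fun _ ha _ hb => setLike_mul_comm (hKH ha) (hKH hb)

theorem index_normalCore_le_factorial_s5 (H : Subgroup G) :
    H.normalCore.index ≤ H.index.factorial := by
  rcases eq_or_ne H.index 0 with h | h
  · have := index_dvd_of_le H.normalCore_le
    rw [h, zero_dvd_iff] at this
    exact this ▸ Nat.zero_le _
  · have : H.FiniteIndex := ⟨h⟩
    rw [normalCore_eq_ker, index_ker, index_eq_card, ← Nat.card_perm]
    exact card_le_card_group _

instance finite_subgroupOf (H K : Subgroup G) [Finite H] : Finite (H.subgroupOf K) :=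
  Finite.of_injective (fun x : H.subgroupOf K => (⟨x.1, x.2⟩ : H))
    fun _ _ h => Subtype.ext <| Subtype.ext <| congrArg (fun x : H => (x : G)) h

theorem relIndex_le_index (H K : Subgroup G) [H.FiniteIndex] : H.relIndex K ≤ H.index := by
  simpa only [relIndex_top_right] using
    relIndex_le_of_le_right le_top (H.relIndex_top_right ▸ FiniteIndex.index_ne_zero)

theorem relIndex_map_subtype {H : Subgroup G} (K : Subgroup H) :
    (K.map H.subtype).relIndex H = K.index := by
  rw [relIndex, ← comap_subtype, comap_map_eq_self_of_injective H.subtype_injective]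

end Subgroup

open Subgroup

theorem JordanGroup.of_forall_exists_isMulCommutative_index_le {G : Type*} [Group G] (J : ℕ)
    (h : ∀ H : Subgroup G, Finite H → ∃ A : Subgroup H, IsMulCommutative A ∧ A.index ≤ J) :
    JordanGroup G := by
  refine ⟨J.factorial, fun H hH => ?_⟩
  obtain ⟨A, hA, hAJ⟩ := h H hH
  exact ⟨A.normalCore, inferInstance, isMulCommutative_of_le_s5 A.normalCore_le,
    A.index_normalCore_le_factorial_s5.trans (Nat.factorial_le hAJ)⟩

theorem JordanGroup.of_finiteIndex {G : Type*} [Group G] {N : Subgroup G} [N.FiniteIndex]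
    (hN : JordanGroup N) : JordanGroup G := by
  obtain ⟨J, hJ⟩ := hN
  refine .of_forall_exists_isMulCommutative_index_le (J * N.index) fun H hH => ?_
  set B := H.subgroupOf N
  obtain ⟨A, -, hA, hAJ⟩ := hJ B inferInstance
  set A₀ : Subgroup G := (A.map B.subtype).map N.subtype
  have hA₀B : A₀ ≤ H ⊓ N := (map_mono (map_subtype_le A)).trans (subgroupOf_map_subtype H N).le
  have hA₀ : A₀.relIndex (H ⊓ N) = A.index := by
    rw [← subgroupOf_map_subtype, relIndex_map_map_of_injective _ _ N.subtype_injective,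
      relIndex_map_subtype]
  refine ⟨A₀.subgroupOf H, inferInstance, ?_⟩
  calc (A₀.subgroupOf H).index = A₀.relIndex H := rfl
    _ = A.index * N.relIndex H := by
      rw [← relIndex_mul_relIndex _ _ _ hA₀B inf_le_left, hA₀, inf_relIndex_left]
    _ ≤ J * N.index := Nat.mul_le_mul hAJ (N.relIndex_le_index H)

/-- If a group `Γ` admits a homomorphism to a finite group whose kernel is
Jordan, then `Γ` is Jordan. -/
theorem stmt_5 {Γ Δ : Type*} [Group Γ] [Group Δ] [Finite Δ]
    (φ : Γ →* Δ) (hker : JordanGroup φ.ker) : JordanGroup Γ :=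
  hker.of_finiteIndex
end
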